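/- Let S ⊆ ℝ² be a nice shape, let p, q ∈ ℝ² be distinct points, and let L be one of the open halfplanes bounded by the line through p and q. Then for any two distinct S-ranges S₁, S₂ ∈ 𝒮_pq, exactly one of S₁ ∩ L ⊊ S₂ ∩ L and S₂ ∩ L ⊊ S₁ ∩ L holds; in particular, the relation ≺ is a strict linear order on 𝒮_pq. -/

import Mathlib

open Set

noncomputable section

/-- The Euclidean plane. -/
abbrev Pt : Type := EuclideanSpace ℝ (Fin 2)

/-- `T` is an `S`-range: a homothetic copy of `S` with positive ratio. -/
def IsRange (S T : Set Pt) : Prop :=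
  ∃ (c : ℝ) (v : Pt), 0 < c ∧ T = (fun x => c • x + v) '' S

/-- A straight line in the plane. -/
def IsLine (l : Set Pt) : Prop :=
  ∃ (f : Pt →ₗ[ℝ] ℝ) (a : ℝ), f ≠ 0 ∧ l = {x | f x = a}

/-- A closed halfplane. -/
def IsClosedHalfplane (H : Set Pt) : Prop :=
  ∃ (f : Pt →ₗ[ℝ] ℝ) (a : ℝ), f ≠ 0 ∧ H = {x | f x ≤ a}

/-- An open halfplane bounded by the line through `p` and `q`. -/
def IsOpenHalfplaneOf (p q : Pt) (L : Set Pt) : Prop :=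
  ∃ (f : Pt →ₗ[ℝ] ℝ) (a : ℝ), f ≠ 0 ∧ f p = a ∧ f q = a ∧ L = {x | a < f x}

/-- `S` is a nice shape: a non-empty convex compact set such that every boundary
point has exactly one touching line and the boundary contains no non-trivial
straight line segment. -/
def NiceShape (S : Set Pt) : Prop :=
  S.Nonempty ∧ Convex ℝ S ∧ IsCompact S ∧
  (∀ p ∈ frontier S, ∃! l : Set Pt, IsLine l ∧ l ∩ S = {p}) ∧
  (∀ x ∈ frontier S, ∀ y ∈ frontier S, segment ℝ x y ⊆ frontier S → x = y)

/-- No four points of `A` lie on the boundary of a common `S`-range. -/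
def NoFourOnBoundary (S A : Set Pt) : Prop :=
  ∀ T : Set Pt, IsRange S T →
    ∀ p₁ p₂ p₃ p₄ : Pt, p₁ ∈ A ∩ frontier T → p₂ ∈ A ∩ frontier T →
      p₃ ∈ A ∩ frontier T → p₄ ∈ A ∩ frontier T →
      p₁ ≠ p₂ → p₁ ≠ p₃ → p₁ ≠ p₄ → p₂ ≠ p₃ → p₂ ≠ p₄ → p₃ ≠ p₄ → False

/-- `X` is in general position with respect to `S`: no two points on a vertical
line, no three points collinear, and no four points on the boundary of a common
`S`-range. -/
def GenPos (S : Set Pt) (X : Finset Pt) : Prop :=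
  (∀ p ∈ X, ∀ q ∈ X, p ≠ q → p 0 ≠ q 0) ∧
  (∀ p ∈ X, ∀ q ∈ X, ∀ r ∈ X, p ≠ q → p ≠ r → q ≠ r →
    ¬ Collinear ℝ ({p, q, r} : Set Pt)) ∧
  NoFourOnBoundary S ↑X

/-- The hyperedges of the `k`-uniform `S`-capturing hypergraph on `X`:
`k`-element subsets of `X` captured by some `S`-range. -/
def capturedSets (S : Set Pt) (X : Finset Pt) (k : ℕ) : Set (Set Pt) :=
  {Y | Y ⊆ ↑X ∧ Y.ncard = k ∧ ∃ T : Set Pt, IsRange S T ∧ ↑X ∩ T = Y}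

/-- The `i`-sets of `X`: `i`-element subsets of `X` separable by a straight line,
i.e. captured by a closed halfplane.  `aᵢ` is the number of such sets. -/
def iSets (X : Finset Pt) (i : ℕ) : Set (Set Pt) :=
  {Y | Y ⊆ ↑X ∧ Y.ncard = i ∧ ∃ H : Set Pt, IsClosedHalfplane H ∧ ↑X ∩ H = Y}

/-- `𝒜ᵢ`: closed halfplanes containing exactly `i` points of `X`, exactly two of
which lie on the boundary line. -/
def repHalfplanes (X : Finset Pt) (i : ℕ) : Set (Set Pt) :=
  {H | IsClosedHalfplane H ∧ ((↑X : Set Pt) ∩ H).ncard = i ∧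
    ((↑X : Set Pt) ∩ frontier H).ncard = 2}

/-- `𝒮_pq`: the `S`-ranges having both `p` and `q` on their boundary. -/
def rangesThrough (S : Set Pt) (p q : Pt) : Set (Set Pt) :=
  {T | IsRange S T ∧ p ∈ frontier T ∧ q ∈ frontier T}

/-- The ranges in `𝒮_pq` that come strictly after `S₁` (w.r.t. `≺`, i.e. inclusion
of the intersections with `L`) and have a point of `X` on their boundary that is
not on the boundary of `S₁`. -/
def nextCandidates (S : Set Pt) (p q : Pt) (L : Set Pt) (X : Finset Pt) (S₁ : Set Pt) :
    Set (Set Pt) :=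
  {S₂ | S₂ ∈ rangesThrough S p q ∧ S₁ ∩ L ⊂ S₂ ∩ L ∧
    ((frontier S₂ \ frontier S₁) ∩ ↑X).Nonempty}

/-- `ℛ₁ᵏ`: Type I ranges, i.e. `S`-ranges containing exactly `k` points of `X`,
exactly three of which are on the boundary. -/
def typeIRanges (S : Set Pt) (X : Finset Pt) (k : ℕ) : Set (Set Pt) :=
  {T | IsRange S T ∧ ((↑X : Set Pt) ∩ T).ncard = k ∧
    ((↑X : Set Pt) ∩ frontier T).ncard = 3}

/-- `ℛ(Y)`: the Type I representative ranges of `Y`. -/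
def repRanges (S : Set Pt) (X : Finset Pt) (Y : Set Pt) : Set (Set Pt) :=
  {T | IsRange S T ∧ ↑X ∩ T = Y ∧ ((↑X : Set Pt) ∩ frontier T).ncard = 3}

/-- `ℰ₁ᵏ`: Type I hyperedges. -/
def typeIEdges (S : Set Pt) (X : Finset Pt) (k : ℕ) : Set (Set Pt) :=
  {Y | Y ⊆ ↑X ∧ Y.ncard = k ∧ (repRanges S X Y).Nonempty}

/-- `ℰ₂ᵏ`: Type II hyperedges, captured by some `S`-range but by no `S`-range with
three points of `X` on its boundary. -/
def typeIIEdges (S : Set Pt) (X : Finset Pt) (k : ℕ) : Set (Set Pt) :=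
  {Y | Y ∈ capturedSets S X k ∧ ¬ (repRanges S X Y).Nonempty}


section Aux


/-- no-segment-in-frontier property -/
def NoSeg (C : Set Pt) : Prop :=
  ∀ x ∈ frontier C, ∀ y ∈ frontier C, segment ℝ x y ⊆ frontier C → x = y

lemma no_mid_frontier {C : Set Pt} (hC : Convex ℝ C) (hcl : IsClosed C)
    (hni : NoSeg C) {u v x : Pt} (hu : u ∈ C) (hv : v ∈ C) (huv : u ≠ v)
    (hx : x ∈ openSegment ℝ u v) (hxf : x ∈ frontier C) : False := by
  have hfr : frontier C = C \ interior C := hcl.frontier_eq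
  have hxint : x ∉ interior C := by rw [hfr] at hxf; exact hxf.2
  -- no point of the open segment is interior
  have hop : ∀ y ∈ openSegment ℝ u v, y ∉ interior C := by
    intro y hy hyint
    obtain ⟨t, ht, hteq⟩ := by
      rw [openSegment_eq_image] at hy; exact hy
    obtain ⟨s, hs, hseq⟩ := by
      rw [openSegment_eq_image] at hx; exact hx
    rcases lt_trichotomy s t with h | h | h
    · -- x ∈ openSegment u y
      apply hxint
      refine hC.openSegment_closure_interior_subset_interior (subset_closure hu) hyint ?_
      refine ⟨1 - s/t, s/t, by have := (div_lt_one ht.1).2 h; linarith,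
        div_pos hs.1 ht.1, by ring, ?_⟩
      rw [← hteq, ← hseq]
      have htne : t ≠ 0 := ne_of_gt ht.1
      match_scalars <;> field_simp <;> ring
    · have hxy : x = y := by rw [← hseq, ← hteq, h]
      exact hxint (hxy ▸ hyint)
    · -- x ∈ openSegment y v
      apply hxint
      refine hC.openSegment_interior_closure_subset_interior hyint (subset_closure hv) ?_
      have h1t : (0:ℝ) < 1 - t := by linarith [ht.2]
      refine ⟨1 - (s-t)/(1-t), (s-t)/(1-t), ?_, div_pos (by linarith) h1t, by ring, ?_⟩
      · have : (s-t)/(1-t) < 1 := (div_lt_one h1t).2 (by linarith [hs.2])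
        linarith
      rw [← hteq, ← hseq]
      have hne : (1:ℝ) - t ≠ 0 := ne_of_gt h1t
      match_scalars <;> field_simp <;> ring
  -- endpoints are in the frontier
  have hue : u ∈ frontier C := by
    rw [hfr]; refine ⟨hu, fun hui => ?_⟩
    exact hxint (hC.openSegment_interior_closure_subset_interior hui (subset_closure hv) hx)
  have hve : v ∈ frontier C := by
    rw [hfr]; refine ⟨hv, fun hvi => ?_⟩
    exact hxint (hC.openSegment_closure_interior_subset_interior (subset_closure hu) hvi hx)
  -- the whole segment is in the frontier
  have hseg : segment ℝ u v ⊆ frontier C := by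
    intro y hy
    rcases eq_or_ne y u with rfl | hyu
    · exact hue
    rcases eq_or_ne y v with rfl | hyv
    · exact hve
    have hyo : y ∈ openSegment ℝ u v := by
      rcases hy with ⟨a, b, ha, hb, hab, rfl⟩
      rcases ha.eq_or_lt with rfl | ha'
      · exact absurd (by rw [show b = 1 by linarith]; simp) hyv
      rcases hb.eq_or_lt with rfl | hb'
      · exact absurd (by rw [show a = 1 by linarith]; simp) hyu
      exact ⟨a, b, ha', hb', hab, rfl⟩
    rw [hfr]
    exact ⟨hC.segment_subset hu hv hy, hop y hyo⟩
  exact huv (hni u hue v hve hseg)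


def crossf (w u : Pt) : ℝ := w 0 * u 1 - w 1 * u 0

lemma pt_ext_iff (u v : Pt) : u = v ↔ u 0 = v 0 ∧ u 1 = v 1 := by
  constructor
  · rintro rfl; exact ⟨rfl, rfl⟩
  · rintro ⟨h0, h1⟩; ext i; fin_cases i <;> assumption

lemma exists_smul_of_crossf_eq_zero {w u : Pt} (hw : w ≠ 0) (h : crossf w u = 0) :
    ∃ t : ℝ, u = t • w := by
  have hw' : w 0 ≠ 0 ∨ w 1 ≠ 0 := by
    by_contra hc
    push_neg at hc
    exact hw ((pt_ext_iff w 0).2 (by simpa using hc))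
  unfold crossf at h
  rcases hw' with h0 | h1
  · refine ⟨u 0 / w 0, (pt_ext_iff _ _).2 ⟨?_, ?_⟩⟩ <;>
      simp only [PiLp.smul_apply, smul_eq_mul] <;> field_simp <;> linarith [h]
  · refine ⟨u 1 / w 1, (pt_ext_iff _ _).2 ⟨?_, ?_⟩⟩ <;>
      simp only [PiLp.smul_apply, smul_eq_mul] <;> field_simp <;> linarith [h]

lemma clm_coord (g : Pt →L[ℝ] ℝ) (u : Pt) : g u = u 0 * g !₂[1,0] + u 1 * g !₂[0,1] := by
  have : u = u 0 • !₂[1,0] + u 1 • !₂[0,1] := by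
    ext i; fin_cases i <;> simp [PiLp.add_apply, PiLp.smul_apply]
  rw [this, map_add, map_smul, map_smul, smul_eq_mul, smul_eq_mul]
  simp [PiLp.add_apply, PiLp.smul_apply]

def kvec (g : Pt →L[ℝ] ℝ) : Pt := !₂[-(g !₂[0,1]), g !₂[1,0]]

lemma kvec_apply0 (g : Pt →L[ℝ] ℝ) : kvec g 0 = -(g !₂[0,1]) := rfl
lemma kvec_apply1 (g : Pt →L[ℝ] ℝ) : kvec g 1 = g !₂[1,0] := rfl

lemma g_kvec (g : Pt →L[ℝ] ℝ) : g (kvec g) = 0 := by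
  rw [clm_coord g (kvec g), kvec_apply0, kvec_apply1]; ring

lemma kvec_ne_zero {g : Pt →L[ℝ] ℝ} {x y : Pt} (hxy : g x ≠ g y) : kvec g ≠ 0 := by
  intro hk
  rw [pt_ext_iff] at hk
  simp only [kvec_apply0, kvec_apply1] at hk
  apply hxy
  rw [clm_coord g x, clm_coord g y]
  have h1 : g !₂[1,0] = 0 := by simpa using hk.2
  have h0 : g !₂[0,1] = 0 := by simpa using hk.1
  simp [h0, h1]

lemma exists_smul_kvec {g : Pt →L[ℝ] ℝ} {x y : Pt} (hxy : g x ≠ g y)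
    {v : Pt} (hv : g v = 0) : ∃ t : ℝ, v = t • kvec g := by
  rw [clm_coord] at hv
  have hne : g !₂[1,0] ≠ 0 ∨ g !₂[0,1] ≠ 0 := by
    by_contra hc
    push_neg at hc
    apply hxy
    rw [clm_coord g x, clm_coord g y, hc.1, hc.2]; ring
  rcases eq_or_ne (g !₂[1,0]) 0 with h0 | h0
  · have h1 : g !₂[0,1] ≠ 0 := hne.resolve_left (not_not_intro h0)
    have hv1 : v 1 = 0 := by
      rw [h0, mul_zero, zero_add] at hv
      exact (mul_eq_zero.mp hv).resolve_right h1
    refine ⟨-(v 0) / g !₂[0,1], (pt_ext_iff _ _).2 ⟨?_, ?_⟩⟩ <;>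
      simp only [PiLp.smul_apply, smul_eq_mul, kvec_apply0, kvec_apply1, hv1, h0] <;>
      field_simp <;> simp
  · refine ⟨v 1 / g !₂[1,0], (pt_ext_iff _ _).2 ⟨?_, ?_⟩⟩ <;>
      simp only [PiLp.smul_apply, smul_eq_mul, kvec_apply0, kvec_apply1] <;>
      field_simp <;> linarith [hv]

lemma mem_osp (a d : Pt) (s₁ s₂ s₃ : ℝ) (h1 : s₁ < s₂) (h2 : s₂ < s₃) :
    a + s₂ • d ∈ openSegment ℝ (a + s₁ • d) (a + s₃ • d) := by
  have h13 : s₃ - s₁ ≠ 0 := ne_of_gt (by linarith)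
  refine ⟨(s₃ - s₂)/(s₃ - s₁), (s₂ - s₁)/(s₃ - s₁),
    div_pos (by linarith) (by linarith), div_pos (by linarith) (by linarith),
    by field_simp; ring, ?_⟩
  match_scalars <;> field_simp <;> ring

lemma mem_os_combo (u v : Pt) (θ : ℝ) (h0 : 0 < θ) (h1 : θ < 1) :
    (1-θ) • u + θ • v ∈ openSegment ℝ u v :=
  ⟨1-θ, θ, by linarith, h0, by ring, rfl⟩


def hmap (c : ℝ) (v : Pt) : Pt → Pt := fun x => c • x + v

def hhomeo (c : ℝ) (hc : c ≠ 0) (v : Pt) : Pt ≃ₜ Pt :=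
  (Homeomorph.smulOfNeZero c hc).trans (Homeomorph.addRight v)

lemma hhomeo_coe (c : ℝ) (hc : c ≠ 0) (v : Pt) : ⇑(hhomeo c hc v) = hmap c v := rfl

def haff (c : ℝ) (v : Pt) : Pt →ᵃ[ℝ] Pt where
  toFun := hmap c v
  linear := c • LinearMap.id
  map_vadd' := by
    intro p w
    simp only [hmap, vadd_eq_add, LinearMap.smul_apply, LinearMap.id_apply, smul_add]
    abel

lemma hmap_cont (c : ℝ) (v : Pt) : Continuous (hmap c v) :=
  (continuous_id.const_smul c).add continuous_const

lemma hmap_inj (c : ℝ) (hc : c ≠ 0) (v : Pt) : Function.Injective (hmap c v) :=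
  (hhomeo c hc v).injective

lemma frontier_hmap (c : ℝ) (hc : c ≠ 0) (v : Pt) (A : Set Pt) :
    frontier (hmap c v '' A) = hmap c v '' frontier A := by
  rw [← hhomeo_coe c hc v, Homeomorph.image_frontier]

lemma interior_hmap (c : ℝ) (hc : c ≠ 0) (v : Pt) (A : Set Pt) :
    interior (hmap c v '' A) = hmap c v '' interior A := by
  rw [← hhomeo_coe c hc v, Homeomorph.image_interior]

lemma convex_hmap (c : ℝ) (v : Pt) {A : Set Pt} (hA : Convex ℝ A) :
    Convex ℝ (hmap c v '' A) := hA.affine_image (haff c v)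

lemma compact_hmap (c : ℝ) (v : Pt) {A : Set Pt} (hA : IsCompact A) :
    IsCompact (hmap c v '' A) := hA.image (hmap_cont c v)

lemma segment_hmap (c : ℝ) (v : Pt) (x y : Pt) :
    hmap c v '' segment ℝ x y = segment ℝ (hmap c v x) (hmap c v y) :=
  image_segment ℝ (haff c v) x y

lemma noSeg_hmap (c : ℝ) (hc : c ≠ 0) (v : Pt) {A : Set Pt} (hA : NoSeg A) :
    NoSeg (hmap c v '' A) := by
  intro x hx y hy hseg
  rw [frontier_hmap c hc v] at hx hy
  obtain ⟨x', hx', rfl⟩ := hx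
  obtain ⟨y', hy', rfl⟩ := hy
  have : segment ℝ x' y' ⊆ frontier A := by
    intro z hz
    have : hmap c v z ∈ frontier (hmap c v '' A) := by
      apply hseg
      rw [← segment_hmap]
      exact mem_image_of_mem _ hz
    rw [frontier_hmap c hc v] at this
    obtain ⟨z', hz', hzz⟩ := this
    rwa [← hmap_inj c hc v hzz]
  rw [hA x' hx' y' hy' this]

lemma hmap_comp (c₁ c₂ : ℝ) (v₁ v₂ : Pt) (A : Set Pt) :
    hmap c₂ v₂ '' (hmap c₁ v₁ '' A) = hmap (c₂ * c₁) (c₂ • v₁ + v₂) '' A := by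
  rw [← image_comp]
  apply image_congr'
  intro x
  simp only [Function.comp_apply, hmap, smul_add, smul_smul]
  abel

lemma range_rel {S T₁ T₂ : Set Pt} (h₁ : IsRange S T₁) (h₂ : IsRange S T₂) :
    ∃ lam w, 0 < lam ∧ T₂ = hmap lam w '' T₁ := by
  obtain ⟨c₁, v₁, hc₁, rfl⟩ := h₁
  obtain ⟨c₂, v₂, hc₂, rfl⟩ := h₂
  refine ⟨c₂ / c₁, v₂ - (c₂/c₁) • v₁, div_pos hc₂ hc₁, ?_⟩
  show hmap c₂ v₂ '' S = _
  rw [show (fun x => c₁ • x + v₁) '' S = hmap c₁ v₁ '' S from rfl, hmap_comp]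
  rw [show c₂ / c₁ * c₁ = c₂ by field_simp,
      show (c₂/c₁) • v₁ + (v₂ - (c₂/c₁) • v₁) = v₂ by abel]

lemma crossf_diff (w a b : Pt) : crossf w b - crossf w a = crossf w (b - a) := by
  simp only [crossf, PiLp.sub_apply]; ring

lemma trans_par {T : Set Pt} (hconv : Convex ℝ T) (hcl : IsClosed T) (hns : NoSeg T)
    {w a b : Pt} (hw : w ≠ 0)
    (ha : a ∈ frontier T) (haw : a - w ∈ frontier T)
    (hb : b ∈ frontier T) (hbw : b - w ∈ frontier T)
    (hab : a ≠ b) {t : ℝ} (ht : b - a = t • w) : False := by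
  have hfs : frontier T ⊆ T := hcl.frontier_subset
  have ht0 : t ≠ 0 := by
    rintro rfl
    exact hab (sub_eq_zero.mp (by simpa using ht)).symm
  have e1 : a - w = a + (-1 : ℝ) • w := by module
  have e2 : b = a + t • w := by rw [← ht]; abel
  have e3 : b - w = a + (t - 1) • w := by rw [e2]; module
  rcases ht0.lt_or_gt with htn | htp
  · -- t < 0 : a - w between b - w and a
    have hmem := mem_osp a w (t-1) (-1) 0 (by linarith) (by linarith)
    rw [← e1, ← e3] at hmem
    simp only [zero_smul, add_zero] at hmem
    have huv : b - w ≠ a := by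
      intro h
      rw [e3] at h
      have : (t - 1) • w = 0 := by
        have := congrArg (fun p => p - a) h
        simpa [add_sub_cancel_left] using this
      rcases smul_eq_zero.mp this with h' | h'
      · linarith
      · exact hw h'
    exact no_mid_frontier hconv hcl hns (hfs hbw) (hfs ha) huv hmem haw
  · -- t > 0 : a between a - w and b
    have hmem := mem_osp a w (-1) 0 t (by linarith) htp
    rw [← e1, ← e2] at hmem
    simp only [zero_smul, add_zero] at hmem
    have huv : a - w ≠ b := by
      intro h
      rw [e1, e2] at h
      have : ((-1 : ℝ) - t) • w = 0 := by
        have := congrArg (fun p => p - a) h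
        simp only [add_sub_cancel_left] at this
        rw [sub_smul]; rw [this]; abel
      rcases smul_eq_zero.mp this with h' | h'
      · linarith
      · exact hw h'
    exact no_mid_frontier hconv hcl hns (hfs haw) (hfs hb) huv hmem ha

lemma trans_mid {T : Set Pt} (hconv : Convex ℝ T) (hcl : IsClosed T) (hns : NoSeg T)
    {w y₁ y₂ y₃ : Pt} (hw : w ≠ 0)
    (h1 : y₁ ∈ frontier T) (h1w : y₁ - w ∈ frontier T)
    (h2 : y₂ ∈ frontier T) (h2w : y₂ - w ∈ frontier T)
    (h3 : y₃ ∈ frontier T) (h3w : y₃ - w ∈ frontier T)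
    (h12 : crossf w y₁ < crossf w y₂) (h23 : crossf w y₂ < crossf w y₃) : False := by
  have hfs : frontier T ⊆ T := hcl.frontier_subset
  set c₁ := crossf w y₁ with hc₁
  set c₂ := crossf w y₂ with hc₂
  set c₃ := crossf w y₃ with hc₃
  have h31 : (0:ℝ) < c₃ - c₁ := by linarith
  set t := (c₂ - c₁)/(c₃ - c₁) with hts
  have ht0 : 0 < t := div_pos (by linarith) h31
  have ht1 : t < 1 := (div_lt_one h31).2 (by linarith)
  set m := (1-t) • y₁ + t • y₃ with hmdef
  have hm : m ∈ T := hconv (hfs h1) (hfs h3) (by linarith) (by linarith) (by ring)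
  have hmw : m - w ∈ T := by
    have : (1-t) • (y₁ - w) + t • (y₃ - w) ∈ T :=
      hconv (hfs h1w) (hfs h3w) (by linarith) (by linarith) (by ring)
    have e : (1-t) • (y₁ - w) + t • (y₃ - w) = m - w := by rw [hmdef]; module
    rwa [e] at this
  have hcm : crossf w (m - y₂) = 0 := by
    have e : crossf w m = (1-t) * c₁ + t * c₃ := by
      rw [hmdef, hc₁, hc₃]
      simp only [crossf, PiLp.add_apply, PiLp.smul_apply, smul_eq_mul]
      ring
    have e2 : crossf w (m - y₂) = crossf w m - c₂ := by rw [← crossf_diff]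
    rw [e2, e, hts]
    field_simp
    ring
  obtain ⟨s, hs⟩ := exists_smul_of_crossf_eq_zero hw hcm
  have hms : m = y₂ + s • w := by rw [← hs]; abel
  rcases lt_trichotomy s 0 with hsn | hs0 | hsp
  · -- y₂ - w strictly between m - w and y₂
    have hmem := mem_osp y₂ w (s-1) (-1) 0 (by linarith) (by linarith)
    have e1 : y₂ + (-1:ℝ) • w = y₂ - w := by module
    have e2 : y₂ + (s-1) • w = m - w := by rw [hms]; module
    have e3 : y₂ + (0:ℝ) • w = y₂ := by module
    rw [e1, e2, e3] at hmem
    have huv : m - w ≠ y₂ := by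
      intro h
      have : (s - 1) • w = 0 := by
        rw [sub_smul, one_smul, ← hs, show m - y₂ - w = m - w - y₂ by abel, h, sub_self]
      rcases smul_eq_zero.mp this with h' | h'
      · linarith
      · exact hw h'
    exact no_mid_frontier hconv hcl hns hmw (hfs h2) huv hmem h2w
  · -- m = y₂ : y₂ strictly between y₁ and y₃
    have hy2 : y₂ = (1-t) • y₁ + t • y₃ := by
      rw [← hmdef, hms, hs0, zero_smul, add_zero]
    have huv : y₁ ≠ y₃ := by
      intro h
      have : c₁ = c₃ := by rw [hc₁, hc₃, h]
      linarith
    have hmem : y₂ ∈ openSegment ℝ y₁ y₃ := by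
      rw [hy2]; exact mem_os_combo y₁ y₃ t ht0 ht1
    exact no_mid_frontier hconv hcl hns (hfs h1) (hfs h3) huv hmem h2
  · -- y₂ strictly between y₂ - w and m
    have hmem := mem_osp y₂ w (-1) 0 s (by linarith) hsp
    have e1 : y₂ + (-1:ℝ) • w = y₂ - w := by module
    have e2 : y₂ + (0:ℝ) • w = y₂ := by module
    rw [e1, e2, ← hms] at hmem
    have huv : y₂ - w ≠ m := by
      intro h
      have : (s + 1) • w = 0 := by
        rw [add_smul, one_smul, ← hs, show m - y₂ + w = m - (y₂ - w) by abel, h, sub_self]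
      rcases smul_eq_zero.mp this with h' | h'
      · linarith
      · exact hw h'
    exact no_mid_frontier hconv hcl hns (hfs h2w) hm huv hmem h2

lemma key_translate {T : Set Pt} (hconv : Convex ℝ T) (hcl : IsClosed T) (hns : NoSeg T)
    {w x y z : Pt} (hw : w ≠ 0) (hxy : x ≠ y) (hxz : x ≠ z) (hyz : y ≠ z)
    (hx : x ∈ frontier T) (hxw : x - w ∈ frontier T)
    (hy : y ∈ frontier T) (hyw : y - w ∈ frontier T)
    (hz : z ∈ frontier T) (hzw : z - w ∈ frontier T) : False := by
  have par : ∀ a b : Pt, a ∈ frontier T → a - w ∈ frontier T →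
      b ∈ frontier T → b - w ∈ frontier T → a ≠ b → crossf w a = crossf w b → False := by
    intro a b ha haw hb hbw hab he
    have : crossf w (b - a) = 0 := by rw [← crossf_diff, he, sub_self]
    obtain ⟨t, ht⟩ := exists_smul_of_crossf_eq_zero hw this
    exact trans_par hconv hcl hns hw ha haw hb hbw hab ht
  rcases eq_or_ne (crossf w x) (crossf w y) with h | hcxy
  · exact par x y hx hxw hy hyw hxy h
  rcases eq_or_ne (crossf w x) (crossf w z) with h | hcxz
  · exact par x z hx hxw hz hzw hxz h
  rcases eq_or_ne (crossf w y) (crossf w z) with h | hcyz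
  · exact par y z hy hyw hz hzw hyz h
  rcases hcxy.lt_or_gt with h1 | h1 <;> rcases hcxz.lt_or_gt with h2 | h2 <;>
    rcases hcyz.lt_or_gt with h3 | h3
  · exact trans_mid hconv hcl hns hw hx hxw hy hyw hz hzw h1 h3
  · exact trans_mid hconv hcl hns hw hx hxw hz hzw hy hyw h2 h3
  · exact absurd h1 (by linarith)
  · exact trans_mid hconv hcl hns hw hz hzw hx hxw hy hyw h2 h1
  · exact trans_mid hconv hcl hns hw hy hyw hx hxw hz hzw h1 h2
  · exact absurd h1 (by linarith)
  · exact trans_mid hconv hcl hns hw hy hyw hz hzw hx hxw h3 h2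
  · exact trans_mid hconv hcl hns hw hz hzw hy hyw hx hxw h3 h1

lemma smul_cancel {d : Pt} (hd : d ≠ 0) {c₁ c₂ : ℝ} (h : c₁ • d = c₂ • d) : c₁ = c₂ := by
  have h0 : (c₁ - c₂) • d = 0 := by rw [sub_smul, h, sub_self]
  rcases smul_eq_zero.mp h0 with h' | h'
  · exact sub_eq_zero.mp h'
  · exact absurd h' hd

lemma homo_collinear {T : Set Pt} (hconv : Convex ℝ T) (hcl : IsClosed T) (hns : NoSeg T)
    {z₀ : Pt} {μ : ℝ} (hμ0 : 0 < μ) (hμ1 : μ < 1)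
    {a b : Pt} (ha : a ∈ frontier T) (ha' : z₀ + μ • (a - z₀) ∈ frontier T)
    (hb : b ∈ frontier T) (hb' : z₀ + μ • (b - z₀) ∈ frontier T)
    (hab : a ≠ b) (hbz : b ≠ z₀) {ρ : ℝ} (hρ : 0 < ρ)
    (hcol : a - z₀ = ρ • (b - z₀)) : False := by
  have hfs : frontier T ⊆ T := hcl.frontier_subset
  have hd : b - z₀ ≠ 0 := sub_ne_zero.2 hbz
  have ea : a = z₀ + ρ • (b - z₀) := by rw [← hcol]; abel
  have hρ1 : ρ ≠ 1 := by
    intro h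
    rw [h, one_smul] at hcol
    exact hab (by have := sub_left_inj.mp hcol; exact this)
  rcases hρ1.lt_or_gt with hlt | hgt
  · -- ρ < 1 : ψb strictly between ψa and b
    have hmem := mem_osp z₀ (b - z₀) (μ*ρ) μ 1 (by nlinarith) hμ1
    rw [show z₀ + (μ*ρ) • (b - z₀) = z₀ + μ • (a - z₀) by rw [hcol, smul_smul],
        show z₀ + (1:ℝ) • (b - z₀) = b by module] at hmem
    have huv : z₀ + μ • (a - z₀) ≠ b := by
      intro h
      have h' : (μ*ρ) • (b - z₀) = (1:ℝ) • (b - z₀) := by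
        rw [one_smul, ← smul_smul, ← hcol]
        have := congrArg (fun p => p - z₀) h
        simpa using this
      have := smul_cancel hd h'
      nlinarith
    exact no_mid_frontier hconv hcl hns (hfs ha') (hfs hb) huv hmem hb'
  · -- ρ > 1 : b strictly between ψb and a
    have hmem := mem_osp z₀ (b - z₀) μ 1 ρ hμ1 hgt
    rw [show z₀ + (1:ℝ) • (b - z₀) = b by module, ← ea] at hmem
    have huv : z₀ + μ • (b - z₀) ≠ a := by
      intro h
      rw [ea] at h
      have := smul_cancel hd (by have := congrArg (fun p => p - z₀) h; simpa using this)
      linarith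
    exact no_mid_frontier hconv hcl hns (hfs hb') (hfs ha) huv hmem hb

lemma homo_mid {T : Set Pt} (hconv : Convex ℝ T) (hcl : IsClosed T) (hns : NoSeg T)
    {z₀ : Pt} {μ : ℝ} (hμ0 : 0 < μ) (hμ1 : μ < 1)
    {a₁ a₂ a₃ : Pt}
    (h1 : a₁ ∈ frontier T) (h1' : z₀ + μ • (a₁ - z₀) ∈ frontier T)
    (h2 : a₂ ∈ frontier T) (h2' : z₀ + μ • (a₂ - z₀) ∈ frontier T)
    (h3 : a₃ ∈ frontier T) (h3' : z₀ + μ • (a₃ - z₀) ∈ frontier T)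
    (h13 : a₁ ≠ a₃) (h2z : a₂ ≠ z₀)
    {A B : ℝ} (hA : 0 < A) (hB : 0 < B)
    (hcomb : a₂ - z₀ = A • (a₁ - z₀) + B • (a₃ - z₀)) : False := by
  have hfs : frontier T ⊆ T := hcl.frontier_subset
  have hAB : (0:ℝ) < A + B := by linarith
  have hABne : A + B ≠ 0 := ne_of_gt hAB
  have hd : a₂ - z₀ ≠ 0 := sub_ne_zero.2 h2z
  have hmT : (A/(A+B)) • a₁ + (B/(A+B)) • a₃ ∈ T :=
    hconv (hfs h1) (hfs h3) (le_of_lt (div_pos hA hAB)) (le_of_lt (div_pos hB hAB))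
      (by field_simp)
  have hmr : (A/(A+B)) • a₁ + (B/(A+B)) • a₃ = z₀ + (1/(A+B)) • (a₂ - z₀) := by
    rw [hcomb]; match_scalars <;> field_simp <;> ring
  have hψmT : (A/(A+B)) • (z₀ + μ • (a₁ - z₀)) + (B/(A+B)) • (z₀ + μ • (a₃ - z₀)) ∈ T :=
    hconv (hfs h1') (hfs h3') (le_of_lt (div_pos hA hAB)) (le_of_lt (div_pos hB hAB))
      (by field_simp)
  have hψmr : (A/(A+B)) • (z₀ + μ • (a₁ - z₀)) + (B/(A+B)) • (z₀ + μ • (a₃ - z₀))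
      = z₀ + (μ * (1/(A+B))) • (a₂ - z₀) := by
    rw [hcomb]; match_scalars <;> field_simp <;> ring
  rcases lt_trichotomy (1/(A+B)) 1 with hr | hr | hr
  · -- ψa₂ strictly between ψm and a₂
    have hmem := mem_osp z₀ (a₂ - z₀) (μ * (1/(A+B))) μ 1 (by nlinarith) hμ1
    rw [← hψmr, show z₀ + (1:ℝ) • (a₂ - z₀) = a₂ by module] at hmem
    have huv : (A/(A+B)) • (z₀ + μ • (a₁ - z₀)) + (B/(A+B)) • (z₀ + μ • (a₃ - z₀)) ≠ a₂ := by
      intro h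
      have h' : (μ * (1/(A+B))) • (a₂ - z₀) = (1:ℝ) • (a₂ - z₀) := by
        rw [one_smul]
        have := congrArg (fun p => p - z₀) h
        rw [hψmr] at this
        simpa using this
      have := smul_cancel hd h'
      nlinarith
    exact no_mid_frontier hconv hcl hns hψmT (hfs h2) huv hmem h2'
  · -- m = a₂ : a₂ strictly between a₁ and a₃
    have hma : (A/(A+B)) • a₁ + (B/(A+B)) • a₃ = a₂ := by
      rw [hmr, hr, one_smul]; abel
    have hmem : a₂ ∈ openSegment ℝ a₁ a₃ :=
      ⟨A/(A+B), B/(A+B), div_pos hA hAB, div_pos hB hAB, by field_simp, hma⟩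
    exact no_mid_frontier hconv hcl hns (hfs h1) (hfs h3) h13 hmem h2
  · -- a₂ strictly between ψa₂ and m
    have hmem := mem_osp z₀ (a₂ - z₀) μ 1 (1/(A+B)) hμ1 hr
    rw [show z₀ + (1:ℝ) • (a₂ - z₀) = a₂ by module, ← hmr] at hmem
    have huv : z₀ + μ • (a₂ - z₀) ≠ (A/(A+B)) • a₁ + (B/(A+B)) • a₃ := by
      intro h
      have h' : μ • (a₂ - z₀) = (1/(A+B)) • (a₂ - z₀) := by
        have := congrArg (fun p => p - z₀) h
        rw [hmr] at this
        simpa using this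
      have := smul_cancel hd h'
      linarith
    exact no_mid_frontier hconv hcl hns (hfs h2') hmT huv hmem h2

lemma key_contraction {T : Set Pt} (hconv : Convex ℝ T) (hcl : IsClosed T) (hns : NoSeg T)
    {z₀ : Pt} {μ : ℝ} (hμ0 : 0 < μ) (hμ1 : μ < 1)
    {x y z : Pt} (hxy : x ≠ y) (hxz : x ≠ z) (hyz : y ≠ z)
    (hx : x ∈ frontier T) (hy : y ∈ frontier T) (hz : z ∈ frontier T)
    (hx' : z₀ + μ • (x - z₀) ∈ frontier T)
    (hy' : z₀ + μ • (y - z₀) ∈ frontier T)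
    (hz' : z₀ + μ • (z - z₀) ∈ frontier T) : False := by
  have hfs : frontier T ⊆ T := hcl.frontier_subset
  -- the center is outside T
  have hz₀T : z₀ ∉ T := by
    intro hzT
    have pick : ∃ a, a ∈ frontier T ∧ (z₀ + μ • (a - z₀)) ∈ frontier T ∧ a ≠ z₀ := by
      rcases eq_or_ne x z₀ with rfl | hxz₀
      · exact ⟨y, hy, hy', fun h => hxy (h.symm)⟩
      · exact ⟨x, hx, hx', hxz₀⟩
    obtain ⟨a, haf, haf', haz⟩ := pick
    have hmem := mem_os_combo z₀ a μ hμ0 hμ1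
    rw [show (1-μ) • z₀ + μ • a = z₀ + μ • (a - z₀) by module] at hmem
    exact no_mid_frontier hconv hcl hns hzT (hfs haf) (Ne.symm haz) hmem haf'
  have hxz₀ : x ≠ z₀ := fun h => hz₀T (h ▸ hfs hx)
  have hyz₀ : y ≠ z₀ := fun h => hz₀T (h ▸ hfs hy)
  have hzz₀ : z ≠ z₀ := fun h => hz₀T (h ▸ hfs hz)
  -- separating functional
  obtain ⟨g, u, hgz, hgT⟩ := geometric_hahn_banach_point_closed hconv hcl hz₀T
  have hGpos : ∀ a ∈ T, 0 < g a - g z₀ := fun a ha => by linarith [hgT a ha]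
  have hgne : g x ≠ g z₀ := fun h => by
    have := hGpos x (hfs hx); rw [h] at this; linarith
  obtain ⟨n, hn⟩ : ∃ n : Pt → Pt, ∀ a, n a = (g a - g z₀)⁻¹ • (a - z₀) :=
    ⟨_, fun _ => rfl⟩
  have hgn : ∀ a ∈ T, g (n a) = 1 := by
    intro a ha
    rw [hn a, map_smul, map_sub, smul_eq_mul]
    exact inv_mul_cancel₀ (ne_of_gt (hGpos a ha))
  -- collinear pairs are impossible
  have hninj : ∀ a b : Pt, a ∈ frontier T → (z₀ + μ • (a - z₀)) ∈ frontier T →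
      b ∈ frontier T → (z₀ + μ • (b - z₀)) ∈ frontier T → a ≠ b → n a ≠ n b := by
    intro a b ha ha' hb hb' hab heq
    have hGa := hGpos a (hfs ha)
    have hGb := hGpos b (hfs hb)
    have hcol : a - z₀ = ((g a - g z₀) * (g b - g z₀)⁻¹) • (b - z₀) := by
      calc a - z₀ = (g a - g z₀) • ((g a - g z₀)⁻¹ • (a - z₀)) := by
            rw [smul_smul, mul_inv_cancel₀ (ne_of_gt hGa), one_smul]
        _ = (g a - g z₀) • ((g b - g z₀)⁻¹ • (b - z₀)) := by
            rw [← hn a, heq, hn b]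
        _ = ((g a - g z₀) * (g b - g z₀)⁻¹) • (b - z₀) := by rw [smul_smul]
    exact homo_collinear hconv hcl hns hμ0 hμ1 ha ha' hb hb' hab
      (fun h => hz₀T (h ▸ hfs hb)) (mul_pos hGa (inv_pos.2 hGb)) hcol
  -- representation along the kernel direction
  have hgdiff : ∀ a b, a ∈ T → b ∈ T → g (n a - n b) = 0 := by
    intro a b ha hb; rw [map_sub, hgn a ha, hgn b hb, sub_self]
  obtain ⟨sy, hsy'⟩ := exists_smul_kvec hgne (hgdiff y x (hfs hy) (hfs hx))
  obtain ⟨sz, hsz'⟩ := exists_smul_kvec hgne (hgdiff z x (hfs hz) (hfs hx))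
  have hsy : n y = n x + sy • kvec g := by rw [← hsy']; abel
  have hsz : n z = n x + sz • kvec g := by rw [← hsz']; abel
  have hsx : n x = n x + (0:ℝ) • kvec g := by rw [zero_smul, add_zero]
  have hk0 : kvec g ≠ 0 := kvec_ne_zero hgne
  have hsy0 : sy ≠ 0 := by
    rintro rfl
    exact hninj y x hy hy' hx hx' (Ne.symm hxy) (by rw [hsy, zero_smul, add_zero])
  have hsz0 : sz ≠ 0 := by
    rintro rfl
    exact hninj z x hz hz' hx hx' (Ne.symm hxz) (by rw [hsz, zero_smul, add_zero])
  have hsyz : sy ≠ sz := by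
    intro h
    exact hninj y z hy hy' hz hz' hyz (by rw [hsy, hsz, h])
  -- middle-point argument for an ordered triple
  have L : ∀ a₁ a₂ a₃ : Pt, a₁ ∈ frontier T → (z₀ + μ • (a₁ - z₀)) ∈ frontier T →
      a₂ ∈ frontier T → (z₀ + μ • (a₂ - z₀)) ∈ frontier T →
      a₃ ∈ frontier T → (z₀ + μ • (a₃ - z₀)) ∈ frontier T → a₁ ≠ a₃ →
      ∀ s₁ s₂ s₃ : ℝ, s₁ < s₂ → s₂ < s₃ →
      n a₁ = n x + s₁ • kvec g → n a₂ = n x + s₂ • kvec g → n a₃ = n x + s₃ • kvec g →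
      False := by
    intro a₁ a₂ a₃ h1 h1' h2 h2' h3 h3' h13 s₁ s₂ s₃ h12 h23 e1 e2 e3
    have hG1 := hGpos a₁ (hfs h1)
    have hG2 := hGpos a₂ (hfs h2)
    have hG3 := hGpos a₃ (hfs h3)
    have h31 : (0:ℝ) < s₃ - s₁ := by linarith
    set θ := (s₃ - s₂)/(s₃ - s₁) with hθ
    have hθ0 : 0 < θ := div_pos (by linarith) h31
    have hθ1 : θ < 1 := (div_lt_one h31).2 (by linarith)
    have hcoef : θ * s₁ + (1-θ) * s₃ = s₂ := by
      rw [hθ]; field_simp; ring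
    have hn2 : n a₂ = θ • n a₁ + (1-θ) • n a₃ := by
      rw [e1, e2, e3, ← hcoef]
      module
    have hcomb : a₂ - z₀ = ((g a₂ - g z₀) * θ * (g a₁ - g z₀)⁻¹) • (a₁ - z₀)
        + ((g a₂ - g z₀) * (1-θ) * (g a₃ - g z₀)⁻¹) • (a₃ - z₀) := by
      calc a₂ - z₀ = (g a₂ - g z₀) • ((g a₂ - g z₀)⁻¹ • (a₂ - z₀)) := by
            rw [smul_smul, mul_inv_cancel₀ (ne_of_gt hG2), one_smul]
        _ = (g a₂ - g z₀) • (θ • ((g a₁ - g z₀)⁻¹ • (a₁ - z₀))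
              + (1-θ) • ((g a₃ - g z₀)⁻¹ • (a₃ - z₀))) := by
            rw [← hn a₂, hn2, hn a₁, hn a₃]
        _ = _ := by match_scalars <;> ring
    exact homo_mid hconv hcl hns hμ0 hμ1 h1 h1' h2 h2' h3 h3' h13
      (fun h => hz₀T (h ▸ hfs h2))
      (mul_pos (mul_pos hG2 hθ0) (inv_pos.2 hG1))
      (mul_pos (mul_pos hG2 (by linarith)) (inv_pos.2 hG3)) hcomb
  -- case analysis on the order of 0, sy, sz
  rcases hsy0.symm.lt_or_gt with h1 | h1 <;> rcases hsz0.symm.lt_or_gt with h2 | h2 <;>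
    rcases hsyz.lt_or_gt with h3 | h3
  · exact L x y z hx hx' hy hy' hz hz' hxz 0 sy sz h1 h3 hsx hsy hsz
  · exact L x z y hx hx' hz hz' hy hy' hxy 0 sz sy h2 h3 hsx hsz hsy
  · exact absurd h1 (by linarith)
  · exact L z x y hz hz' hx hx' hy hy' (Ne.symm hyz) sz 0 sy h2 h1 hsz hsx hsy
  · exact L y x z hy hy' hx hx' hz hz' hyz sy 0 sz h1 h2 hsy hsx hsz
  · exact absurd h1 (by linarith)
  · exact L y z x hy hy' hz hz' hx hx' (Ne.symm hxy) sy sz 0 h3 h2 hsy hsz hsx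
  · exact L z y x hz hz' hy hy' hx hx' (Ne.symm hxz) sz sy 0 h3 h1 hsz hsy hsx

lemma nice_props {S T : Set Pt} (hS : NiceShape S) (h : IsRange S T) :
    T.Nonempty ∧ Convex ℝ T ∧ IsCompact T ∧ NoSeg T := by
  obtain ⟨c, v, hc, rfl⟩ := h
  obtain ⟨hne, hconv, hcomp, -, hns⟩ := hS
  exact ⟨hne.image _, convex_hmap c v hconv, compact_hmap c v hcomp,
    noSeg_hmap c (ne_of_gt hc) v hns⟩

lemma hmap_id (A : Set Pt) : hmap 1 0 '' A = A := by
  rw [show hmap 1 0 = id from funext fun x => by simp [hmap]]; exact image_id A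

lemma key_expansion {T U : Set Pt} (hconv : Convex ℝ T) (hcl : IsClosed T) (hns : NoSeg T)
    {lam : ℝ} {w : Pt} (hl : 1 < lam) (hU : U = hmap lam w '' T)
    {x y z : Pt} (hxy : x ≠ y) (hxz : x ≠ z) (hyz : y ≠ z)
    (hxT : x ∈ frontier T) (hxU : x ∈ frontier U)
    (hyT : y ∈ frontier T) (hyU : y ∈ frontier U)
    (hzT : z ∈ frontier T) (hzU : z ∈ frontier U) : False := by
  have hlam0 : lam ≠ 0 := by positivity
  have h1l : (1:ℝ) - lam ≠ 0 := by intro h; linarith [h]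
  have hμ0 : 0 < lam⁻¹ := by positivity
  have hμ1 : lam⁻¹ < 1 := by
    rw [← one_div, div_lt_one (by linarith)]; linarith
  have hψ : ∀ a, a ∈ frontier U → ((1-lam)⁻¹ • w) + lam⁻¹ • (a - (1-lam)⁻¹ • w) ∈ frontier T := by
    intro a ha
    rw [hU, frontier_hmap lam hlam0 w] at ha
    obtain ⟨a', ha', he⟩ := ha
    have : (1-lam)⁻¹ • w + lam⁻¹ • (a - (1-lam)⁻¹ • w) = a' := by
      rw [← he]
      show (1-lam)⁻¹ • w + lam⁻¹ • (lam • a' + w - (1-lam)⁻¹ • w) = a'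
      match_scalars <;> field_simp <;> ring
    rwa [this]
  exact key_contraction hconv hcl hns hμ0 hμ1 hxy hxz hyz hxT hyT hzT
    (hψ x hxU) (hψ y hyU) (hψ z hzU)

lemma key_three {S T₁ T₂ : Set Pt} (hS : NiceShape S) (h₁ : IsRange S T₁) (h₂ : IsRange S T₂)
    (hne : T₁ ≠ T₂) {x y z : Pt} (hxy : x ≠ y) (hxz : x ≠ z) (hyz : y ≠ z)
    (hx₁ : x ∈ frontier T₁) (hx₂ : x ∈ frontier T₂)
    (hy₁ : y ∈ frontier T₁) (hy₂ : y ∈ frontier T₂)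
    (hz₁ : z ∈ frontier T₁) (hz₂ : z ∈ frontier T₂) : False := by
  obtain ⟨-, hconv₁, hcomp₁, hns₁⟩ := nice_props hS h₁
  obtain ⟨-, hconv₂, hcomp₂, hns₂⟩ := nice_props hS h₂
  obtain ⟨lam, w, hlam, hT⟩ := range_rel h₁ h₂
  have hlam0 : lam ≠ 0 := ne_of_gt hlam
  rcases lt_trichotomy lam 1 with hl | hl | hl
  · -- lam < 1 : T₁ is an expansion of T₂
    have hT' : T₁ = hmap lam⁻¹ (-(lam⁻¹ • w)) '' T₂ := by
      rw [hT, hmap_comp, show lam⁻¹ * lam = 1 by field_simp,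
          show lam⁻¹ • w + -(lam⁻¹ • w) = (0:Pt) by abel, hmap_id]
    have h1 : 1 < lam⁻¹ := by
      rw [← one_div, lt_div_iff₀ hlam]; linarith
    exact key_expansion hconv₂ hcomp₂.isClosed hns₂ h1 hT' hxy hxz hyz
      hx₂ hx₁ hy₂ hy₁ hz₂ hz₁
  · -- lam = 1 : translation
    subst hl
    have hw : w ≠ 0 := by
      rintro rfl
      rw [hmap_id] at hT
      exact hne hT.symm
    have hsub : ∀ a, a ∈ frontier T₂ → a - w ∈ frontier T₁ := by
      intro a ha
      rw [hT, frontier_hmap 1 one_ne_zero w] at ha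
      obtain ⟨a', ha', he⟩ := ha
      have : a - w = a' := by
        rw [← he]; show 1 • a' + w - w = a'; rw [one_smul]; abel
      rwa [this]
    exact key_translate hconv₁ hcomp₁.isClosed hns₁ hw hxy hxz hyz
      hx₁ (hsub x hx₂) hy₁ (hsub y hy₂) hz₁ (hsub z hz₂)
  · -- lam > 1 : T₂ is an expansion of T₁
    exact key_expansion hconv₁ hcomp₁.isClosed hns₁ hl hT hxy hxz hyz
      hx₁ hx₂ hy₁ hy₂ hz₁ hz₂

lemma mid_interior {T : Set Pt} (hconv : Convex ℝ T) (hcl : IsClosed T) (hns : NoSeg T)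
    {p q : Pt} (hpq : p ≠ q) (hp : p ∈ frontier T) (hq : q ∈ frontier T) :
    (1/2 : ℝ) • p + (1/2 : ℝ) • q ∈ interior T := by
  have hfs : frontier T ⊆ T := hcl.frontier_subset
  have hmT : (1/2 : ℝ) • p + (1/2 : ℝ) • q ∈ T :=
    hconv (hfs hp) (hfs hq) (by norm_num) (by norm_num) (by norm_num)
  by_contra hmI
  have hmf : (1/2 : ℝ) • p + (1/2 : ℝ) • q ∈ frontier T := by
    rw [hcl.frontier_eq]; exact ⟨hmT, hmI⟩
  have hmem : (1/2 : ℝ) • p + (1/2 : ℝ) • q ∈ openSegment ℝ p q := by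
    have := mem_os_combo p q (1/2) (by norm_num) (by norm_num)
    rwa [show (1 : ℝ) - 1/2 = 1/2 by norm_num] at this
  exact no_mid_frontier hconv hcl hns (hfs hp) (hfs hq) hpq hmem hmf

lemma interior_push {T : Set Pt} {x : Pt} (hx : x ∈ interior T) {u : Pt} (hu : u ≠ 0) :
    ∃ δ : ℝ, 0 < δ ∧ x + δ • u ∈ T := by
  obtain ⟨ε, hε, hball⟩ := Metric.mem_nhds_iff.mp (mem_interior_iff_mem_nhds.mp hx)
  have hnu : (0:ℝ) < ‖u‖ := norm_pos_iff.2 hu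
  refine ⟨ε / (2 * ‖u‖), by positivity, hball ?_⟩
  rw [Metric.mem_ball, dist_eq_norm]
  rw [show x + (ε / (2 * ‖u‖)) • u - x = (ε / (2 * ‖u‖)) • u by abel]
  rw [norm_smul, Real.norm_eq_abs, abs_of_pos (by positivity)]
  rw [div_mul_eq_mul_div, mul_comm]
  rw [mul_div_assoc]
  calc ‖u‖ * (ε / (2 * ‖u‖)) = ε / 2 := by field_simp
    _ < ε := by linarith

lemma tset_coe (o : Pt) : (fun x : Pt => x + o) = ⇑(Homeomorph.addRight o) := rfl

lemma tset_convex {T : Set Pt} (hT : Convex ℝ T) (o : Pt) :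
    Convex ℝ ((fun x : Pt => x + o) ⁻¹' T) := by
  have : (fun x : Pt => x + o) = ⇑(haff 1 o) := by
    funext x; show x + o = hmap 1 o x; simp [hmap]
  rw [this]
  exact hT.affine_preimage (haff 1 o)

lemma tset_frontier (T : Set Pt) (o : Pt) :
    frontier ((fun x : Pt => x + o) ⁻¹' T) = (fun x : Pt => x + o) ⁻¹' (frontier T) := by
  rw [tset_coe, Homeomorph.preimage_frontier]

lemma tset_nhds {T : Set Pt} {o : Pt} (ho : o ∈ interior T) :
    (fun x : Pt => x + o) ⁻¹' T ∈ nhds (0 : Pt) := by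
  rw [← mem_interior_iff_mem_nhds, tset_coe, ← Homeomorph.preimage_interior]
  show (0 : Pt) + o ∈ interior T
  rwa [zero_add]

lemma tset_closed {T : Set Pt} (hT : IsClosed T) (o : Pt) :
    IsClosed ((fun x : Pt => x + o) ⁻¹' T) :=
  hT.preimage (continuous_add_right o)

lemma tset_bounded {T : Set Pt} (hT : IsCompact T) (o : Pt) :
    Bornology.IsVonNBounded ℝ ((fun x : Pt => x + o) ⁻¹' T) := by
  have hc : IsCompact ((fun x : Pt => x + o) ⁻¹' T) := by
    rw [tset_coe]
    exact (Homeomorph.isCompact_preimage _).2 hT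
  exact NormedSpace.isVonNBounded_of_isBounded _ hc.isBounded

lemma compare {S T₁ T₂ : Set Pt} (hS : NiceShape S) (h₁ : IsRange S T₁) (h₂ : IsRange S T₂)
    (hne : T₁ ≠ T₂) {p q : Pt} (hpq : p ≠ q)
    (hp₁ : p ∈ frontier T₁) (hp₂ : p ∈ frontier T₂)
    (hq₁ : q ∈ frontier T₁) (hq₂ : q ∈ frontier T₂)
    {f : Pt →ₗ[ℝ] ℝ} {α : ℝ} (hfp : f p = α) (hfq : f q = α) :
    T₁ ∩ {x | α < f x} ⊆ T₂ ∩ {x | α < f x} ∨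
      T₂ ∩ {x | α < f x} ⊆ T₁ ∩ {x | α < f x} := by
  by_contra hcon
  push_neg at hcon
  obtain ⟨hc₁, hc₂⟩ := hcon
  obtain ⟨a, ha, ha'⟩ := not_subset.mp hc₁
  obtain ⟨b, hb, hb'⟩ := not_subset.mp hc₂
  have haT₂ : a ∉ T₂ := fun h => ha' ⟨h, ha.2⟩
  have hbT₁ : b ∉ T₁ := fun h => hb' ⟨h, hb.2⟩
  have ha2 : α < f a := ha.2
  have hb2 : α < f b := hb.2
  obtain ⟨-, hconv₁, hcomp₁, hnsg₁⟩ := nice_props hS h₁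
  obtain ⟨-, hconv₂, hcomp₂, hnsg₂⟩ := nice_props hS h₂
  have hcl₁ := hcomp₁.isClosed
  have hcl₂ := hcomp₂.isClosed
  -- choose an interior point o with α < f o < min (f a) (f b)
  have hOex : ∃ o : Pt, o ∈ interior T₁ ∧ o ∈ interior T₂ ∧
      α < f o ∧ f o < f a ∧ f o < f b := by
    have hm₁ := mid_interior hconv₁ hcl₁ hnsg₁ hpq hp₁ hq₁
    have hm₂ := mid_interior hconv₂ hcl₂ hnsg₂ hpq hp₂ hq₂
    have hfm : f ((1/2 : ℝ) • p + (1/2 : ℝ) • q) = α := by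
      simp only [map_add, map_smul, hfp, hfq, smul_eq_mul]; ring
    have hccont : Continuous
        (fun t : ℝ => ((1/2 : ℝ) • p + (1/2 : ℝ) • q) + t • (a - ((1/2 : ℝ) • p + (1/2 : ℝ) • q))) :=
      continuous_const.add (continuous_id.smul continuous_const)
    have hUopen : IsOpen (interior T₁ ∩ interior T₂) := isOpen_interior.inter isOpen_interior
    have hpre : (fun t : ℝ => ((1/2 : ℝ) • p + (1/2 : ℝ) • q)
        + t • (a - ((1/2 : ℝ) • p + (1/2 : ℝ) • q))) ⁻¹' (interior T₁ ∩ interior T₂)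
        ∈ nhds (0:ℝ) :=
      (hUopen.preimage hccont).mem_nhds (by
        simp only [mem_preimage, zero_smul, add_zero]
        exact ⟨hm₁, hm₂⟩)
    obtain ⟨ε, hε, hball⟩ := Metric.mem_nhds_iff.mp hpre
    obtain ⟨t₀, ht₀pos, ht₀ε, ht₀half, ht₀X⟩ :
        ∃ t₀ : ℝ, 0 < t₀ ∧ t₀ < ε ∧ t₀ ≤ 1/2 ∧ t₀ ≤ (f b - α)/(2*(f a - α)) := by
      refine ⟨min (ε/2) (min (1/2 : ℝ) ((f b - α)/(2*(f a - α)))),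
        lt_min (by positivity) (lt_min (by norm_num) (div_pos (by linarith) (by linarith))),
        ?_, le_trans (min_le_right _ _) (min_le_left _ _),
        le_trans (min_le_right _ _) (min_le_right _ _)⟩
      calc min (ε/2) (min (1/2 : ℝ) ((f b - α)/(2*(f a - α)))) ≤ ε/2 := min_le_left _ _
        _ < ε := by linarith
    have htball : t₀ ∈ Metric.ball (0:ℝ) ε := by
      rw [Metric.mem_ball, dist_zero_right, Real.norm_eq_abs, abs_of_pos ht₀pos]
      exact ht₀ε
    have hoU := Set.mem_preimage.mp (hball htball)
    have hval : f (((1/2 : ℝ) • p + (1/2 : ℝ) • q)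
        + t₀ • (a - ((1/2 : ℝ) • p + (1/2 : ℝ) • q))) = α + t₀ * (f a - α) := by
      simp only [map_add, map_smul, map_sub, smul_eq_mul, hfm]
    refine ⟨((1/2 : ℝ) • p + (1/2 : ℝ) • q)
      + t₀ • (a - ((1/2 : ℝ) • p + (1/2 : ℝ) • q)), hoU.1, hoU.2, ?_, ?_, ?_⟩
    · rw [hval]; nlinarith
    · rw [hval]; nlinarith
    · rw [hval]
      have hfa0 : f a - α ≠ 0 := ne_of_gt (by linarith)
      have hX : ((f b - α)/(2*(f a - α))) * (f a - α) = (f b - α)/2 := by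
        field_simp
      have hmul := mul_le_mul_of_nonneg_right ht₀X
        (le_of_lt (show (0:ℝ) < f a - α by linarith))
      rw [hX] at hmul
      linarith
  obtain ⟨o, ho₁, ho₂, hoα, hofa, hofb⟩ := hOex
  -- gauge setup
  set s₁ : Set Pt := (fun x : Pt => x + o) ⁻¹' T₁ with hs₁def
  set s₂ : Set Pt := (fun x : Pt => x + o) ⁻¹' T₂ with hs₂def
  have hsc₁ : Convex ℝ s₁ := tset_convex hconv₁ o
  have hsc₂ : Convex ℝ s₂ := tset_convex hconv₂ o
  have hsn₁ : s₁ ∈ nhds (0 : Pt) := tset_nhds ho₁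
  have hsn₂ : s₂ ∈ nhds (0 : Pt) := tset_nhds ho₂
  have hmem₁ : ∀ x : Pt, x ∈ T₁ ↔ x - o ∈ s₁ := by
    intro x; rw [hs₁def]; simp [sub_add_cancel]
  have hmem₂ : ∀ x : Pt, x ∈ T₂ ↔ x - o ∈ s₂ := by
    intro x; rw [hs₂def]; simp [sub_add_cancel]
  have hga : gauge s₁ (a - o) ≤ 1 := gauge_le_one_of_mem ((hmem₁ a).mp ha.1)
  have hgb : gauge s₂ (b - o) ≤ 1 := gauge_le_one_of_mem ((hmem₂ b).mp hb.1)
  have hga' : 1 < gauge s₂ (a - o) := by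
    by_contra hle
    push_neg at hle
    have := (gauge_le_one_iff_mem_closure hsc₂ hsn₂).mp hle
    rw [(tset_closed hcl₂ o).closure_eq] at this
    exact haT₂ ((hmem₂ a).mpr this)
  have hgb' : 1 < gauge s₁ (b - o) := by
    by_contra hle
    push_neg at hle
    have := (gauge_le_one_iff_mem_closure hsc₁ hsn₁).mp hle
    rw [(tset_closed hcl₁ o).closure_eq] at this
    exact hbT₁ ((hmem₁ b).mpr this)
  -- a path of directions
  obtain ⟨d, hdcont, hd0, hd1, hdf⟩ : ∃ d : ℝ → Pt, Continuous d ∧ d 0 = a - o ∧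
      d 1 = b - o ∧ ∀ t, f (d t) = (1-t) * (f a - f o) + t * (f b - f o) := by
    refine ⟨fun t => (1-t) • (a - o) + t • (b - o),
      ((continuous_const.sub continuous_id).smul continuous_const).add
        (continuous_id.smul continuous_const), by simp, by simp, fun t => ?_⟩
    simp only [map_add, map_smul, map_sub, smul_eq_mul]
    try ring
  have hφcont : Continuous (fun t => gauge s₁ (d t) - gauge s₂ (d t)) :=
    ((continuous_gauge hsc₁ hsn₁).comp hdcont).sub ((continuous_gauge hsc₂ hsn₂).comp hdcont)
  have hφ0 : gauge s₁ (d 0) - gauge s₂ (d 0) < 0 := by rw [hd0]; linarith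
  have hφ1 : 0 < gauge s₁ (d 1) - gauge s₂ (d 1) := by rw [hd1]; linarith
  obtain ⟨ts, hts, hφts⟩ := intermediate_value_Icc (by norm_num : (0:ℝ) ≤ 1)
    hφcont.continuousOn ⟨le_of_lt hφ0, le_of_lt hφ1⟩
  have hGeq : gauge s₂ (d ts) = gauge s₁ (d ts) := by
    have h0 : gauge s₁ (d ts) - gauge s₂ (d ts) = 0 := hφts
    linarith
  have hfd : 0 < f (d ts) := by
    rw [hdf ts]
    obtain ⟨hts0, hts1⟩ := hts
    rcases le_or_gt (f a - f o) (f b - f o) with hcc | hcc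
    · nlinarith [mul_nonneg hts0 (show (0:ℝ) ≤ (f b - f o) - (f a - f o) by linarith)]
    · nlinarith [mul_nonneg (show (0:ℝ) ≤ 1 - ts by linarith)
        (show (0:ℝ) ≤ (f a - f o) - (f b - f o) by linarith)]
  have hdne : d ts ≠ 0 := by
    intro h
    rw [h, map_zero] at hfd
    exact lt_irrefl 0 hfd
  have hG : 0 < gauge s₁ (d ts) :=
    (gauge_pos (absorbent_nhds_zero hsn₁) (tset_bounded hcomp₁ o)).2 hdne
  have hxso : (o + (gauge s₁ (d ts))⁻¹ • d ts) - o = (gauge s₁ (d ts))⁻¹ • d ts := by abel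
  have hgauge1 : gauge s₁ ((o + (gauge s₁ (d ts))⁻¹ • d ts) - o) = 1 := by
    rw [hxso, gauge_smul_of_nonneg (inv_nonneg.2 (le_of_lt hG)), smul_eq_mul]
    exact inv_mul_cancel₀ (ne_of_gt hG)
  have hgauge2 : gauge s₂ ((o + (gauge s₁ (d ts))⁻¹ • d ts) - o) = 1 := by
    rw [hxso, gauge_smul_of_nonneg (inv_nonneg.2 (le_of_lt hG)), hGeq, smul_eq_mul]
    exact inv_mul_cancel₀ (ne_of_gt hG)
  have hxs₁ : o + (gauge s₁ (d ts))⁻¹ • d ts ∈ frontier T₁ := by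
    have h1 := (gauge_eq_one_iff_mem_frontier hsc₁ hsn₁).mp hgauge1
    rw [hs₁def, tset_frontier] at h1
    have h2 : ((o + (gauge s₁ (d ts))⁻¹ • d ts) - o) + o ∈ frontier T₁ := h1
    rwa [show ((o + (gauge s₁ (d ts))⁻¹ • d ts) - o) + o
      = o + (gauge s₁ (d ts))⁻¹ • d ts by abel] at h2
  have hxs₂ : o + (gauge s₁ (d ts))⁻¹ • d ts ∈ frontier T₂ := by
    have h1 := (gauge_eq_one_iff_mem_frontier hsc₂ hsn₂).mp hgauge2
    rw [hs₂def, tset_frontier] at h1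
    have h2 : ((o + (gauge s₁ (d ts))⁻¹ • d ts) - o) + o ∈ frontier T₂ := h1
    rwa [show ((o + (gauge s₁ (d ts))⁻¹ • d ts) - o) + o
      = o + (gauge s₁ (d ts))⁻¹ • d ts by abel] at h2
  have hfxs : α < f (o + (gauge s₁ (d ts))⁻¹ • d ts) := by
    rw [map_add, map_smul, smul_eq_mul]
    have : 0 < (gauge s₁ (d ts))⁻¹ * f (d ts) := mul_pos (inv_pos.2 hG) hfd
    linarith
  have hpxs : p ≠ o + (gauge s₁ (d ts))⁻¹ • d ts := fun h => by
    rw [← h, hfp] at hfxs; exact lt_irrefl α hfxs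
  have hqxs : q ≠ o + (gauge s₁ (d ts))⁻¹ • d ts := fun h => by
    rw [← h, hfq] at hfxs; exact lt_irrefl α hfxs
  exact key_three hS h₁ h₂ hne hpq hpxs hqxs hp₁ hp₂ hq₁ hq₂ hxs₁ hxs₂

lemma inter_ne {S T₁ T₂ : Set Pt} (hS : NiceShape S) (h₁ : IsRange S T₁) (h₂ : IsRange S T₂)
    (hne : T₁ ≠ T₂) {p q : Pt} (hpq : p ≠ q)
    (hp₁ : p ∈ frontier T₁) (hp₂ : p ∈ frontier T₂)
    (hq₁ : q ∈ frontier T₁) (hq₂ : q ∈ frontier T₂)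
    {f : Pt →ₗ[ℝ] ℝ} {α : ℝ} (hf : f ≠ 0) (hfp : f p = α) (hfq : f q = α) :
    T₁ ∩ {x | α < f x} ≠ T₂ ∩ {x | α < f x} := by
  intro hEq
  obtain ⟨hT₁ne, hconv₁, hcomp₁, hnsg₁⟩ := nice_props hS h₁
  obtain ⟨-, hconv₂, hcomp₂, hnsg₂⟩ := nice_props hS h₂
  have hcl₁ := hcomp₁.isClosed
  have hcl₂ := hcomp₂.isClosed
  obtain ⟨u, hu⟩ : ∃ u : Pt, 0 < f u := by
    by_contra hcon
    push_neg at hcon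
    apply hf
    ext v
    have h1 := hcon v
    have h2 := hcon (-v)
    rw [map_neg] at h2
    simp only [LinearMap.zero_apply]
    linarith
  have hu0 : u ≠ 0 := fun h => by rw [h, map_zero] at hu; exact lt_irrefl 0 hu
  have fcont : Continuous f := f.continuous_of_finiteDimensional
  obtain ⟨x, hxT, hmax'⟩ := hcomp₁.exists_isMaxOn hT₁ne fcont.continuousOn
  have hmax := isMaxOn_iff.mp hmax'
  have hm₁ := mid_interior hconv₁ hcl₁ hnsg₁ hpq hp₁ hq₁
  have hαx : α < f x := by
    obtain ⟨δ, hδ, hδT⟩ := interior_push hm₁ hu0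
    have hy := hmax _ hδT
    have he : f ((1/2:ℝ) • p + (1/2:ℝ) • q + δ • u) = α + δ * f u := by
      simp only [map_add, map_smul, smul_eq_mul, hfp, hfq]; ring
    rw [he] at hy
    nlinarith
  have hxfr₁ : x ∈ frontier T₁ := by
    rw [hcl₁.frontier_eq]
    refine ⟨hxT, fun hint => ?_⟩
    obtain ⟨δ, hδ, hδT⟩ := interior_push hint hu0
    have hy := hmax _ hδT
    rw [map_add, map_smul, smul_eq_mul] at hy
    nlinarith
  have hxT₂ : x ∈ T₂ := by
    have : x ∈ T₂ ∩ {x | α < f x} := hEq ▸ (⟨hxT, hαx⟩ : x ∈ T₁ ∩ {x | α < f x})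
    exact this.1
  have hxfr₂ : x ∈ frontier T₂ := by
    rw [hcl₂.frontier_eq]
    refine ⟨hxT₂, fun hint => ?_⟩
    obtain ⟨δ, hδ, hδT⟩ := interior_push hint hu0
    have hfy : α < f (x + δ • u) := by
      rw [map_add, map_smul, smul_eq_mul]
      nlinarith
    have hy2 : x + δ • u ∈ T₂ ∩ {x | α < f x} := ⟨hδT, hfy⟩
    rw [← hEq] at hy2
    have hy := hmax _ hy2.1
    rw [map_add, map_smul, smul_eq_mul] at hy
    nlinarith
  have hpx : p ≠ x := fun h => by rw [← h, hfp] at hαx; exact lt_irrefl α hαx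
  have hqx : q ≠ x := fun h => by rw [← h, hfq] at hαx; exact lt_irrefl α hαx
  exact key_three hS h₁ h₂ hne hpq hpx hqx hp₁ hp₂ hq₁ hq₂ hxfr₁ hxfr₂


end Aux

/-- for any two distinct ranges in `𝒮_pq`, exactly one of
`S₁ ∩ L ⊊ S₂ ∩ L` and `S₂ ∩ L ⊊ S₁ ∩ L` holds; hence the relation `≺` given by
proper inclusion of the intersections with `L` is a strict linear order on
`𝒮_pq`. -/
theorem rangesThrough_linearly_ordered
    (S : Set Pt) (hS : NiceShape S) (p q : Pt) (hpq : p ≠ q)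
    (L : Set Pt) (hL : IsOpenHalfplaneOf p q L) :
    ∀ S₁ ∈ rangesThrough S p q, ∀ S₂ ∈ rangesThrough S p q, S₁ ≠ S₂ →
      Xor' (S₁ ∩ L ⊂ S₂ ∩ L) (S₂ ∩ L ⊂ S₁ ∩ L) := by
  intro S₁ hS₁ S₂ hS₂ hne
  obtain ⟨f, α, hf, hfp, hfq, rfl⟩ := hL
  obtain ⟨hr₁, hp₁, hq₁⟩ := hS₁
  obtain ⟨hr₂, hp₂, hq₂⟩ := hS₂
  have hcmp := compare hS hr₁ hr₂ hne hpq hp₁ hp₂ hq₁ hq₂ hfp hfq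
  have hneq := inter_ne hS hr₁ hr₂ hne hpq hp₁ hp₂ hq₁ hq₂ hf hfp hfq
  rcases hcmp with h | h
  · exact Or.inl ⟨ssubset_iff_subset_ne.mpr ⟨h, hneq⟩, fun hcon => hcon.not_subset h⟩
  · exact Or.inr ⟨ssubset_iff_subset_ne.mpr ⟨h, hneq.symm⟩, fun hcon => hcon.not_subset h⟩
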